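/- Define 𝓔in(g) = Riem(g) + g ⊙ (a Ric(g) + b R(g) g + c g) where ⊙ is the Kulkarni–Nomizu product. If c = ((1+(n-2)a)/(2(n-1))) Λ and b = (κ[1+a(n-2)] - a)/(2(n-1)), then Tr_g 𝓔in(g) = [a(n-2)+1] (Ric(g) + κ R(g) g + Λ g), i.e. the g-trace of 𝓔in(g) is proportional to Ein(g). -/

import Mathlib

/-! Taking the trace of `g ⊙ k` turns `k` into `(n - 2) k + (Tr k) g`, so the trace of
`Riem + g ⊙ (a Ric + b R g + c g)` is the combination
`(1 + (n - 2) a) Ric + (a + 2 (n - 1) b) R g + 2 (n - 1) c g`;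
the choice of `b` and `c` makes the last two coefficients `(1 + (n - 2) a) κ` and
`(1 + (n - 2) a) Λ`. -/

section Trace

variable {F S : Type*} [CommRing F] [Algebra ℝ F]
  [AddCommGroup S] [Module F S] [Module ℝ S] [IsScalarTower ℝ F S]

lemma trace_combination_smul_metric (n : ℕ) (a b c : ℝ) (Tr : S →ₗ[F] F) (Ricc gm : S)
    (R : F) (hTrg : Tr gm = (n : F)) (hTrRic : Tr Ricc = R) :
    Tr (a • Ricc + b • (R • gm) + c • gm) • gm
      = a • (R • gm) + (b * n) • (R • gm) + (c * n) • gm := by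
  have natCast_smul : ∀ x : S, (n : F) • x = (n : ℝ) • x := fun x => by
    rw [Nat.cast_smul_eq_nsmul, Nat.cast_smul_eq_nsmul]
  have trace_eq : Tr (a • Ricc + b • (R • gm) + c • gm) = a • R + b • (R * n) + c • (n : F) := by
    simp [LinearMap.map_smul_of_tower, hTrg, hTrRic]
  rw [trace_eq, add_smul, add_smul, smul_assoc, smul_assoc, smul_assoc, mul_comm R, mul_smul,
    natCast_smul, smul_smul, natCast_smul, smul_smul]

end Trace

lemma ricci_scalar_coeff_eq {n a b κ : ℝ} (hn : n - 1 ≠ 0)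
    (hb : b = (κ * (1 + a * (n - 2)) - a) / (2 * (n - 1))) :
    a + b * n + (n - 2) * b = (a * (n - 2) + 1) * κ := by
  subst hb
  field_simp
  ring

lemma metric_coeff_eq {n a c Λ : ℝ} (hn : n - 1 ≠ 0)
    (hc : c = ((1 + (n - 2) * a) / (2 * (n - 1))) * Λ) :
    c * n + (n - 2) * c = (a * (n - 2) + 1) * Λ := by
  subst hc
  field_simp
  ring

/-- define 𝓔in(g) = Riem(g) + g ⊙ (a Ric(g) + b R(g) g + c g) with the
Kulkarni–Nomizu product ⊙.  If c = ((1+(n-2)a)/(2(n-1)))Λ and b = (κ[1+a(n-2)]-a)/(2(n-1)),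
then Tr_g 𝓔in(g) = [a(n-2)+1](Ric(g) + κ R(g) g + Λ g) = [a(n-2)+1] Ein(g).
Setting: F = functions, S = symmetric 2-tensors (an F-module), T4 = curvature-type 4-tensors;
Tr4 is the g-trace from T4 to S, KN the (bilinear) Kulkarni–Nomizu product; the hypotheses
encode Tr_g Riem = Ric, Tr_g (g ⊙ k) = (n-2)k + (Tr_g k)g, Tr_g g = n and Tr_g Ric = R. -/
theorem trace_RiemannChristoffel_Ein
    {F S T4 : Type*} [CommRing F] [Algebra ℝ F]
    [AddCommGroup S] [Module F S] [Module ℝ S] [IsScalarTower ℝ F S]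
    [AddCommGroup T4] [Module ℝ T4]
    (n : ℕ) (hn : 2 ≤ n) (a b c κ Λ : ℝ)
    (Tr : S →ₗ[F] F) (Tr4 : T4 →ₗ[ℝ] S) (KN : S →ₗ[ℝ] S →ₗ[ℝ] T4)
    (Riem : T4) (Ricc gm : S) (R : F)
    (hTrRiem : Tr4 Riem = Ricc)
    (hTrKN : ∀ k : S, Tr4 (KN gm k) = ((n : ℝ) - 2) • k + Tr k • gm)
    (hTrg : Tr gm = (n : F)) (hTrRic : Tr Ricc = R)
    (hb : b = (κ * (1 + a * ((n : ℝ) - 2)) - a) / (2 * ((n : ℝ) - 1)))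
    (hc : c = ((1 + ((n : ℝ) - 2) * a) / (2 * ((n : ℝ) - 1))) * Λ) :
    Tr4 (Riem + KN gm (a • Ricc + b • (R • gm) + c • gm)) =
      (a * ((n : ℝ) - 2) + 1) • (Ricc + κ • (R • gm) + Λ • gm) := by
  have hn1 : (n : ℝ) - 1 ≠ 0 := by
    have : (2 : ℝ) ≤ n := by exact_mod_cast hn
    linarith
  rw [map_add, hTrRiem, hTrKN, trace_combination_smul_metric n a b c Tr Ricc gm R hTrg hTrRic]
  generalize R • gm = X
  match_scalars
  · ring
  · linear_combination ricci_scalar_coeff_eq hn1 hb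
  · linear_combination metric_coeff_eq hn1 hc
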